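/- Let (Ω,𝓕,ℙ) be a probability space and let u : [a,b] × Ω → ℝ be a jointly measurable random field whose realizations are almost surely continuous. For x ∈ [a,b], δ > 0 with x + δ ∈ [a,b], and σ ∈ {±1}, set p_σ(x,δ) = ℙ{σ·u(x) ≥ 0, σ·u(x+δ/2) ≤ 0, σ·u(x+δ) ≥ 0}, and assume there is a constant C₀ > 0 with p_σ(x,δ) ≤ C₀·δ³ for all σ ∈ {±1} and all admissible x, δ. Then for every interval I = [x₀, x₀+δ] ⊆ [a,b], the probability that I is not admissible for u(·,ω) is at most (8/3)·C₀·δ³. -/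

import Mathlib

open Set MeasureTheory

/-! A non-admissible interval `[x₀, x₀ + δ]` has a double crossover on one of its `2ⁿ` dyadic
subintervals of length `δ / 2ⁿ`, for some `n`. Each of these has probability at most
`2·C₀·(δ / 2ⁿ)³` (one term per sign), so level `n` contributes at most `2·C₀·δ³·4⁻ⁿ`, and
summing the geometric series over `n` gives `(8/3)·C₀·δ³`. -/

/-- A continuous function `v` has a *double crossover* on `[α, β]` if for some sign
`σ ∈ {+1, −1}` one has `σ·v(α) ≥ 0`, `σ·v((α+β)/2) ≤ 0` and `σ·v(β) ≥ 0`. -/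
def DoubleCrossover (v : ℝ → ℝ) (α β : ℝ) : Prop :=
  ∃ σ : ℝ, (σ = 1 ∨ σ = -1) ∧
    0 ≤ σ * v α ∧ σ * v ((α + β) / 2) ≤ 0 ∧ 0 ≤ σ * v β

/-- The interval `[α, β]` is *admissible* for `v` if `v` has no double crossover on any
dyadic subinterval `[d_{n,k}, d_{n,k+1}]`, where `d_{n,k} = α + (β − α)·k/2^n`. -/
def IntervalAdmissible (v : ℝ → ℝ) (α β : ℝ) : Prop :=
  ∀ n k : ℕ, k < 2 ^ n →
    ¬ DoubleCrossover v (α + (β - α) * k / 2 ^ n) (α + (β - α) * (k + 1) / 2 ^ n)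

open scoped ENNReal

lemma ENNReal.tsum_ofReal_mul_geometric (c : ℝ) {r : ℝ} (hr₀ : 0 ≤ r) (hr₁ : r < 1) :
    ∑' n : ℕ, ENNReal.ofReal (c * r ^ n) = ENNReal.ofReal (c * (1 - r)⁻¹) := by
  have hsum : ∑' n : ℕ, ENNReal.ofReal (r ^ n) = ENNReal.ofReal (1 - r)⁻¹ := by
    rw [← ENNReal.ofReal_tsum_of_nonneg (fun n => by positivity)
      (summable_geometric_of_lt_one hr₀ hr₁), tsum_geometric_of_lt_one hr₀ hr₁]
  simp_rw [ENNReal.ofReal_mul' (pow_nonneg hr₀ _)]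
  rw [ENNReal.tsum_mul_left, hsum, ← ENNReal.ofReal_mul' (by linarith [inv_pos.2 (sub_pos.2 hr₁)])]

lemma ENNReal.tsum_two_pow_mul_ofReal_mul_div_two_pow_cube (C δ : ℝ) :
    ∑' n : ℕ, (2 : ℝ≥0∞) ^ n * ENNReal.ofReal (C * (δ / 2 ^ n) ^ 3) =
      ENNReal.ofReal (4 / 3 * C * δ ^ 3) := by
  have hterm (n : ℕ) : (2 : ℝ≥0∞) ^ n * ENNReal.ofReal (C * (δ / 2 ^ n) ^ 3) =
      ENNReal.ofReal (C * δ ^ 3 * (1 / 4) ^ n) := by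
    rw [← ENNReal.ofReal_ofNat 2, ← ENNReal.ofReal_pow zero_le_two,
      ← ENNReal.ofReal_mul (by positivity)]
    congr 1
    rw [div_pow, one_div_pow, show (4 : ℝ) ^ n = (2 ^ n) ^ 2 by rw [← pow_mul, mul_comm, pow_mul]; norm_num]
    field_simp
  simp_rw [hterm]
  rw [ENNReal.tsum_ofReal_mul_geometric _ (by norm_num) (by norm_num)]
  congr 1
  ring

lemma left_le_dyadic_and_dyadic_add_le_right {α β : ℝ} (hαβ : α ≤ β) {n k : ℕ} (hk : k < 2 ^ n) :
    α ≤ α + (β - α) * k / 2 ^ n ∧ α + (β - α) * k / 2 ^ n + (β - α) / 2 ^ n ≤ β := by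
  have hk' : (k : ℝ) + 1 ≤ 2 ^ n := by exact_mod_cast hk
  have hlen : 0 ≤ β - α := sub_nonneg.2 hαβ
  refine ⟨le_add_of_nonneg_right (by positivity), ?_⟩
  rw [add_assoc, ← add_div, ← mul_add_one, ← le_sub_iff_add_le', div_le_iff₀ (by positivity)]
  exact mul_le_mul_of_nonneg_left hk' hlen

section RandomField

variable {Ω : Type*} [MeasurableSpace Ω] (μ : Measure Ω) (u : ℝ → Ω → ℝ)

lemma measure_doubleCrossover_le {x δ : ℝ} {c : ℝ≥0∞}
    (h : ∀ σ : ℝ, (σ = 1 ∨ σ = -1) →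
      μ {ω | 0 ≤ σ * u x ω ∧ σ * u (x + δ / 2) ω ≤ 0 ∧ 0 ≤ σ * u (x + δ) ω} ≤ c) :
    μ {ω | DoubleCrossover (fun y => u y ω) x (x + δ)} ≤ 2 * c := by
  set S : ℝ → Set Ω := fun σ =>
    {ω | 0 ≤ σ * u x ω ∧ σ * u (x + δ / 2) ω ≤ 0 ∧ 0 ≤ σ * u (x + δ) ω}
  have hsub : {ω | DoubleCrossover (fun y => u y ω) x (x + δ)} ⊆ S 1 ∪ S (-1) := by
    rintro ω ⟨σ, hσ | hσ, hcross⟩ <;> subst hσ <;>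
      simp only [mem_union, S, mem_ofPred_eq, show (x + (x + δ)) / 2 = x + δ / 2 by ring] at hcross ⊢
    exacts [Or.inl hcross, Or.inr hcross]
  calc μ {ω | DoubleCrossover (fun y => u y ω) x (x + δ)}
      ≤ μ (S 1) + μ (S (-1)) := (measure_mono hsub).trans (measure_union_le _ _)
    _ ≤ 2 * c := by rw [two_mul]; exact add_le_add (h 1 (.inl rfl)) (h (-1) (.inr rfl))

lemma measure_not_intervalAdmissible_le_tsum (α β : ℝ) :
    μ {ω | ¬ IntervalAdmissible (fun x => u x ω) α β} ≤
      ∑' n : ℕ, ∑ k ∈ Finset.range (2 ^ n), μ {ω | DoubleCrossover (fun x => u x ω)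
        (α + (β - α) * k / 2 ^ n) (α + (β - α) * k / 2 ^ n + (β - α) / 2 ^ n)} := by
  have hcover : {ω | ¬ IntervalAdmissible (fun x => u x ω) α β} ⊆
      ⋃ n : ℕ, ⋃ k ∈ Finset.range (2 ^ n), {ω | DoubleCrossover (fun x => u x ω)
        (α + (β - α) * k / 2 ^ n) (α + (β - α) * k / 2 ^ n + (β - α) / 2 ^ n)} := by
    intro ω hω
    simp only [IntervalAdmissible, not_forall, not_not, mem_ofPred_eq] at hω
    obtain ⟨n, k, hk, hcross⟩ := hω
    rw [show α + (β - α) * (k + 1) / 2 ^ n = α + (β - α) * k / 2 ^ n + (β - α) / 2 ^ n by ring]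
      at hcross
    exact mem_iUnion₂.2 ⟨n, k, mem_iUnion.2 ⟨Finset.mem_range.2 hk, hcross⟩⟩
  calc _ ≤ _ := measure_mono hcover
    _ ≤ _ := measure_iUnion_le _
    _ ≤ _ := ENNReal.tsum_le_tsum fun n => measure_biUnion_finset_le _ _

end RandomField

theorem prob_interval_not_admissible_general
    (Ω : Type*) [MeasurableSpace Ω] (ℙ : Measure Ω)
    (a b : ℝ) (u : ℝ → Ω → ℝ)
    (C₀ : ℝ)
    (hp : ∀ σ : ℝ, (σ = 1 ∨ σ = -1) → ∀ x δ : ℝ, 0 < δ → a ≤ x → x + δ ≤ b →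
      ℙ {ω | 0 ≤ σ * u x ω ∧ σ * u (x + δ / 2) ω ≤ 0 ∧ 0 ≤ σ * u (x + δ) ω} ≤
        ENNReal.ofReal (C₀ * δ ^ 3))
    (x₀ δ : ℝ) (hδ : 0 < δ) (hx₀ : a ≤ x₀) (hx₀δ : x₀ + δ ≤ b) :
    ℙ {ω | ¬ IntervalAdmissible (fun x => u x ω) x₀ (x₀ + δ)} ≤
      ENNReal.ofReal (8 / 3 * C₀ * δ ^ 3) := by
  have hlevel (n k : ℕ) (hk : k < 2 ^ n) :
      ℙ {ω | DoubleCrossover (fun x => u x ω)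
        (x₀ + δ * k / 2 ^ n) (x₀ + δ * k / 2 ^ n + δ / 2 ^ n)} ≤
        2 * ENNReal.ofReal (C₀ * (δ / 2 ^ n) ^ 3) := by
    obtain ⟨hleft, hright⟩ := left_le_dyadic_and_dyadic_add_le_right (le_add_of_nonneg_right hδ.le) hk
    rw [add_sub_cancel_left] at hleft hright
    exact measure_doubleCrossover_le ℙ u fun σ hσ =>
      hp σ hσ _ _ (by positivity) (hx₀.trans hleft) (hright.trans hx₀δ)
  calc ℙ {ω | ¬ IntervalAdmissible (fun x => u x ω) x₀ (x₀ + δ)}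
      ≤ ∑' n : ℕ, ∑ k ∈ Finset.range (2 ^ n), 2 * ENNReal.ofReal (C₀ * (δ / 2 ^ n) ^ 3) := by
        refine (measure_not_intervalAdmissible_le_tsum ℙ u _ _).trans
          (ENNReal.tsum_le_tsum fun n => Finset.sum_le_sum fun k hk => ?_)
        simpa only [add_sub_cancel_left] using hlevel n k (Finset.mem_range.1 hk)
    _ = 2 * ∑' n : ℕ, (2 : ℝ≥0∞) ^ n * ENNReal.ofReal (C₀ * (δ / 2 ^ n) ^ 3) := by
        simp only [Finset.sum_const, Finset.card_range, nsmul_eq_mul, Nat.cast_pow,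
          Nat.cast_ofNat, mul_left_comm _ (2 : ℝ≥0∞), ENNReal.tsum_mul_left]
    _ = ENNReal.ofReal (8 / 3 * C₀ * δ ^ 3) := by
        rw [ENNReal.tsum_two_pow_mul_ofReal_mul_div_two_pow_cube, ← ENNReal.ofReal_ofNat 2,
          ← ENNReal.ofReal_mul zero_le_two]
        ring_nf

/-- If the double-crossover probabilities of the random field `u` on `[a, b]` satisfy
`p_σ(x, δ) ≤ C₀·δ³`, then for every interval `I = [x₀, x₀ + δ] ⊆ [a, b]` the probability
that `I` is not admissible is at most `(8/3)·C₀·δ³`. -/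
theorem prob_interval_not_admissible
    (Ω : Type*) [MeasurableSpace Ω] (ℙ : Measure Ω) [IsProbabilityMeasure ℙ]
    (a b : ℝ) (hab : a < b) (u : ℝ → Ω → ℝ)
    (hmeas : Measurable (Function.uncurry u))
    (hcont : ∀ᵐ ω ∂ℙ, ContinuousOn (fun x => u x ω) (Icc a b))
    (C₀ : ℝ) (hC₀ : 0 < C₀)
    (hp : ∀ σ : ℝ, (σ = 1 ∨ σ = -1) → ∀ x δ : ℝ, 0 < δ → a ≤ x → x + δ ≤ b →
      ℙ {ω | 0 ≤ σ * u x ω ∧ σ * u (x + δ / 2) ω ≤ 0 ∧ 0 ≤ σ * u (x + δ) ω} ≤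
        ENNReal.ofReal (C₀ * δ ^ 3))
    (x₀ δ : ℝ) (hδ : 0 < δ) (hx₀ : a ≤ x₀) (hx₀δ : x₀ + δ ≤ b) :
    ℙ {ω | ¬ IntervalAdmissible (fun x => u x ω) x₀ (x₀ + δ)} ≤
      ENNReal.ofReal (8 / 3 * C₀ * δ ^ 3) :=
  prob_interval_not_admissible_general Ω ℙ a b u C₀ hp x₀ δ hδ hx₀ hx₀δ
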